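/- arXiv:2604.23097 — 6 statements merged into one kernel-verified Lean document; each statement's English description precedes it below -/
import Mathlib

section
/- Let T : F_{q^m} → F_{q^m} be an F_q-linear map and let C = im(T) ⊆ F_{q^m}, with dual taken with respect to the nondegenerate trace bilinear form ⟨a,b⟩ = Tr_{F_{q^m}/F_q}(ab). Fix an F_q-basis e_1,…,e_m of F_{q^m} and let G_T be the m×m matrix over F_q with entries (G_T)_{ij} = Tr_{F_{q^m}/F_q}(T(e_i)·T(e_j)). Then dim_{F_q}(C ∩ C^⊥) = rank(T) − rank(G_T). -/
/-!
Put `C = range T` and let `φ : V → Dual W` send `v` to `w ↦ B (T w) v`. The Gram matrix of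
`B` pulled back along `T` is the matrix of `φ ∘ T`, so its rank is `dim φ(C)`, while
`ker φ = C^⊥`. Rank–nullity for `φ` restricted to `C` gives `dim C = rank G + dim (C ∩ C^⊥)`.
-/

open Module LinearMap

section

variable {K V W : Type*} [Field K] [AddCommGroup V] [Module K V] [AddCommGroup W] [Module K W]

theorem Submodule.finrank_map_add_finrank_inf_ker {U : Type*} [AddCommGroup U] [Module K U]
    (f : V →ₗ[K] U) (C : Submodule K V) [FiniteDimensional K C] :
    finrank K (C.map f) + finrank K ↥(C ⊓ ker f) = finrank K C := by
  have := finrank_range_add_finrank_ker (f.domRestrict C)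
  rwa [range_domRestrict, ker_domRestrict, ← Submodule.finrank_map_subtype_eq,
    Submodule.map_comap_subtype] at this

namespace LinearMap.BilinForm

theorem ker_dualMap_comp_flip (B : LinearMap.BilinForm K V) (T : W →ₗ[K] V) :
    ker (T.dualMap ∘ₗ B.flip) = B.orthogonal (range T) := by
  ext x
  simp [mem_orthogonal_iff, LinearMap.ext_iff]

variable {ι : Type*} [Fintype ι] [DecidableEq ι]

theorem toMatrix_eq_toMatrix_flip (b : Basis ι K V) (B : LinearMap.BilinForm K V) :
    toMatrix b B = LinearMap.toMatrix b b.dualBasis B.flip := by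
  ext i j
  simp [LinearMap.toMatrix_apply, toMatrix_apply]

theorem rank_toMatrix (b : Basis ι K V) (B : LinearMap.BilinForm K V) :
    (toMatrix b B).rank = finrank K (range B.flip) := by
  rw [toMatrix_eq_toMatrix_flip, Matrix.rank_eq_finrank_range_toLin _ b.dualBasis b,
    Matrix.toLin_toMatrix]

theorem rank_toMatrix_compl₁₂_add_finrank_inf_orthogonal (b : Basis ι K W)
    (B : LinearMap.BilinForm K V) (T : W →ₗ[K] V) :
    (toMatrix b (B.compl₁₂ T T)).rank + finrank K ↥(range T ⊓ B.orthogonal (range T)) =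
      finrank K (range T) := by
  have : FiniteDimensional K W := b.finiteDimensional_of_finite
  have hflip : BilinForm.flip (B.compl₁₂ T T) = T.dualMap ∘ₗ B.flip ∘ₗ T := rfl
  rw [rank_toMatrix, hflip, ← comp_assoc, range_comp, ← ker_dualMap_comp_flip B T]
  exact Submodule.finrank_map_add_finrank_inf_ker _ _

end LinearMap.BilinForm

end

theorem stmt0_general (K L : Type*) [Field K] [Field L] [Algebra K L]
    (m : ℕ) (e : Module.Basis (Fin m) K L) (T : L →ₗ[K] L)
    (G : Matrix (Fin m) (Fin m) K)
    (hG : ∀ i j, G i j = Algebra.trace K L (T (e i) * T (e j))) :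
    Module.finrank K ↥(LinearMap.range T ⊓
        (Algebra.traceForm K L).orthogonal (LinearMap.range T)) =
      Module.finrank K ↥(LinearMap.range T) - G.rank := by
  have hGram : G = LinearMap.BilinForm.toMatrix e ((Algebra.traceForm K L).compl₁₂ T T) := by
    ext i j
    simp [hG, LinearMap.BilinForm.toMatrix_apply]
  have := LinearMap.BilinForm.rank_toMatrix_compl₁₂_add_finrank_inf_orthogonal e
    (Algebra.traceForm K L) T
  rw [hGram]
  omega

/-- Master hull–rank theorem: for an `F_q`-linear map `T` on `F_{q^m}` with image code
`C = im T`, the hull dimension equals `rank T - rank G_T`, where `G_T` is the Gram matrix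
of the trace form pulled back along `T` in a fixed basis. -/
theorem stmt0 (K L : Type*) [Field K] [Fintype K] [Field L] [Fintype L] [Algebra K L]
    (m : ℕ) (e : Module.Basis (Fin m) K L) (T : L →ₗ[K] L)
    (G : Matrix (Fin m) (Fin m) K)
    (hG : ∀ i j, G i j = Algebra.trace K L (T (e i) * T (e j))) :
    Module.finrank K ↥(LinearMap.range T ⊓
        (Algebra.traceForm K L).orthogonal (LinearMap.range T)) =
      Module.finrank K ↥(LinearMap.range T) - G.rank :=
  stmt0_general K L m e T G hG
end

section
/- Let 1 ≤ k ≤ m−1, d = gcd(k,m), and λ, μ ∈ F_{q^m} with μ ≠ 0; set ρ = λ/μ and φ(x) = λx + μx^{q^k}. Then dim_{F_q} ker(φ) = d if (−ρ)^{(q^m−1)/(q^d−1)} = 1, and dim_{F_q} ker(φ) = 0 otherwise. -/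
/-!
Writing `c = -λ/μ` and `n = q^k - 1`, the kernel of `φ` is `{0} ∪ {x ≠ 0 | x^n = c}`. The
equation `x^n = c` in the cyclic group `F_{q^m}^*` of order `N = q^m - 1` has `gcd(N, n)`
solutions if `c^(N / gcd(N, n)) = 1`, and none otherwise; here `gcd(q^m - 1, q^k - 1) = q^d - 1`.
So the kernel has `q^d` or `1` elements.
-/

theorem IsCyclic.range_powMonoidHom {G : Type*} [CommGroup G] [IsCyclic G] [Finite G] (n : ℕ) :
    (powMonoidHom n : G →* G).range =
      (powMonoidHom (Nat.card G / (Nat.card G).gcd n)).ker := by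
  have hgN : (Nat.card G).gcd n ∣ Nat.card G := Nat.gcd_dvd_left _ _
  refine Subgroup.eq_of_le_of_card_ge ?_ ?_
  · rintro _ ⟨x, rfl⟩
    have hexp : n * (Nat.card G / (Nat.card G).gcd n) = Nat.card G * (n / (Nat.card G).gcd n) := by
      rw [← Nat.mul_div_assoc _ hgN, ← Nat.mul_div_assoc _ (Nat.gcd_dvd_right _ _), mul_comm]
    change (x ^ n) ^ _ = 1
    rw [← pow_mul, hexp, pow_mul, pow_card_eq_one', one_pow]
  · rw [IsCyclic.card_powMonoidHom_ker, IsCyclic.card_powMonoidHom_range,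
      Nat.gcd_eq_right (Nat.div_dvd_of_dvd hgN)]

theorem IsCyclic.card_pow_eq {G : Type*} [CommGroup G] [IsCyclic G] [Finite G] [DecidableEq G]
    (n : ℕ) (c : G) :
    Nat.card {x : G // x ^ n = c} =
      if c ^ (Nat.card G / (Nat.card G).gcd n) = 1 then (Nat.card G).gcd n else 0 := by
  split_ifs with hc
  · obtain ⟨x₀, rfl⟩ : c ∈ (powMonoidHom n : G →* G).range := by
      rwa [IsCyclic.range_powMonoidHom]
    rw [← IsCyclic.card_powMonoidHom_ker, ← Nat.card_congr ((powMonoidHom n).fiberEquivKer x₀)]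
    rfl
  · refine Nat.card_eq_zero.mpr (Or.inl ⟨fun ⟨x, hx⟩ => hc ?_⟩)
    have hmem : c ∈ (powMonoidHom n : G →* G).range := ⟨x, hx⟩
    rwa [IsCyclic.range_powMonoidHom] at hmem

theorem FiniteField.card_units_pow_eq {L : Type*} [Field L] [Finite L] [DecidableEq L]
    (n : ℕ) (c : L) :
    Nat.card {u : Lˣ // (u : L) ^ n = c} =
      if c ^ (Nat.card Lˣ / (Nat.card Lˣ).gcd n) = 1 then (Nat.card Lˣ).gcd n else 0 := by
  rcases eq_or_ne c 0 with rfl | hc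
  · have hexp : Nat.card Lˣ / (Nat.card Lˣ).gcd n ≠ 0 :=
      (Nat.div_pos (Nat.gcd_le_left _ Nat.card_pos) (Nat.gcd_pos_of_pos_left _ Nat.card_pos)).ne'
    simp [hexp]
  · simpa only [Units.ext_iff, Units.val_pow_eq_pow_val, Units.val_mk0, Units.val_one] using
      IsCyclic.card_pow_eq n (Units.mk0 c hc)

theorem FiniteField.card_pow_succ_eq_mul_self {L : Type*} [Field L] [Finite L] (n : ℕ) (c : L) :
    Nat.card {x : L // x ^ (n + 1) = c * x} = Nat.card {u : Lˣ // (u : L) ^ n = c} + 1 := by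
  have hset : {x : L | x ^ (n + 1) = c * x} = insert 0 ((↑) '' {u : Lˣ | (u : L) ^ n = c}) := by
    ext x
    rcases eq_or_ne x 0 with rfl | hx
    · simp
    · simp only [Set.mem_ofPred_eq, Set.mem_insert_iff, hx, Set.mem_image, false_or, pow_succ]
      constructor
      · exact fun h => ⟨Units.mk0 x hx, mul_right_cancel₀ hx h, rfl⟩
      · rintro ⟨u, hu, rfl⟩
        rw [hu]
  rw [← Set.coe_ofPred, Nat.card_coe_set_eq, hset, Set.ncard_insert_of_notMem,
    Set.ncard_image_of_injective _ Units.val_injective, ← Nat.card_coe_set_eq]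
  · rfl
  · rintro ⟨u, -, hu⟩
    exact u.ne_zero hu

theorem stmt6_general (K L : Type*) [Field K] [Fintype K] [Field L] [Fintype L] [Algebra K L]
    (k : ℕ)
    (lam mu : L) (hmu : mu ≠ 0)
    (φ : L →ₗ[K] L) (hφ : ∀ x, φ x = lam * x + mu * x ^ Fintype.card K ^ k) :
    ((-(lam / mu)) ^ ((Fintype.card K ^ Module.finrank K L - 1) /
        (Fintype.card K ^ Nat.gcd k (Module.finrank K L) - 1)) = 1 →
      Module.finrank K ↥(LinearMap.ker φ) = Nat.gcd k (Module.finrank K L)) ∧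
    ((-(lam / mu)) ^ ((Fintype.card K ^ Module.finrank K L - 1) /
        (Fintype.card K ^ Nat.gcd k (Module.finrank K L) - 1)) ≠ 1 →
      Module.finrank K ↥(LinearMap.ker φ) = 0) := by
  classical
  set q := Fintype.card K
  set m := Module.finrank K L
  have hq : 2 ≤ q := Fintype.one_lt_card (α := K)
  have hq_pow_pos : ∀ j, 1 ≤ q ^ j := fun j => Nat.one_le_pow _ _ (by omega)
  have hunits : Nat.card Lˣ = q ^ m - 1 := by
    rw [Nat.card_units, Nat.card_eq_fintype_card (α := L), Module.card_eq_pow_finrank (K := K)]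
  have hker : Nat.card (LinearMap.ker φ) =
      Nat.card {x : L // x ^ (q ^ k - 1 + 1) = -(lam / mu) * x} := by
    refine Nat.card_congr (Equiv.subtypeEquivRight fun x => ?_)
    rw [LinearMap.mem_ker, hφ, Nat.sub_add_cancel (hq_pow_pos k)]
    constructor <;> intro h
    · field_simp
      linear_combination h
    · rw [h]
      field_simp
      ring
  rw [FiniteField.card_pow_succ_eq_mul_self, FiniteField.card_units_pow_eq, hunits,
    Nat.pow_sub_one_gcd_pow_sub_one, Nat.gcd_comm m k, Module.natCard_eq_pow_finrank (K := K),
    Nat.card_eq_fintype_card (α := K)] at hker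
  refine ⟨fun h => Nat.pow_right_injective hq ?_, fun h => Nat.pow_right_injective hq ?_⟩
  · rwa [if_pos h, Nat.sub_add_cancel (hq_pow_pos _)] at hker
  · rwa [if_neg h] at hker

/-- Kernel dimension of `φ(x) = λx + μx^{q^k}` on `F_{q^m}` (`μ ≠ 0`, `ρ = λ/μ`,
`d = gcd(k,m)`): it is `d` if `(-ρ)^{(q^m-1)/(q^d-1)} = 1`, and `0` otherwise. -/
theorem stmt6 (K L : Type*) [Field K] [Fintype K] [Field L] [Fintype L] [Algebra K L]
    (hm : 2 ≤ Module.finrank K L)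
    (k : ℕ) (hk1 : 1 ≤ k) (hk2 : k ≤ Module.finrank K L - 1)
    (lam mu : L) (hmu : mu ≠ 0)
    (φ : L →ₗ[K] L) (hφ : ∀ x, φ x = lam * x + mu * x ^ Fintype.card K ^ k) :
    ((-(lam / mu)) ^ ((Fintype.card K ^ Module.finrank K L - 1) /
        (Fintype.card K ^ Nat.gcd k (Module.finrank K L) - 1)) = 1 →
      Module.finrank K ↥(LinearMap.ker φ) = Nat.gcd k (Module.finrank K L)) ∧
    ((-(lam / mu)) ^ ((Fintype.card K ^ Module.finrank K L - 1) /
        (Fintype.card K ^ Nat.gcd k (Module.finrank K L) - 1)) ≠ 1 →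
      Module.finrank K ↥(LinearMap.ker φ) = 0) :=
  stmt6_general K L k lam mu hmu φ hφ
end

section
/- Let 1 ≤ k ≤ m−1, d = gcd(k,m), λ, μ ∈ F_{q^m}^* with x^{q^k−1} = −λ/μ having a solution in F_{q^m}^*. Then ker(x ↦ λx + μx^{q^k}) is an F_{q^d}-subspace of F_{q^m} of F_q-dimension d, equal to {0} together with a single coset of F_{q^d}^* in F_{q^m}^*. -/
/-!
The Frobenius `σ : x ↦ x ^ q` has order `m` in `Gal(F_{q^m}/F_q)`. If `x₀` is one
nonzero root of `λx + μx^{q^k}`, then `x = c x₀` is a root iff `c^{q^k} = c`, i.e. iff `c` is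
fixed by `σ^k`; since also `σ^m = 1`, this means `c` is fixed by `σ^d`. The fixed field of
`⟨σ^d⟩`, a group of order `m / d`, has degree `d` over `F_q`.
-/

open Function IntermediateField FiniteField

lemma pow_succ_eq_pow_mul_iff {L : Type*} [Field L] {x₀ : L} (hx₀ : x₀ ≠ 0) (e : ℕ)
    (x : L) :
    x ^ (e + 1) = x₀ ^ e * x ↔ ∃ c : L, c ^ (e + 1) = c ∧ x = c * x₀ := by
  constructor
  · intro hx
    refine ⟨x / x₀, ?_, (div_mul_cancel₀ x hx₀).symm⟩
    rw [div_pow, hx, pow_succ]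
    field_simp
  · rintro ⟨c, hc, rfl⟩
    rw [mul_pow, hc, pow_succ]
    ring

lemma add_mul_pow_succ_eq_zero_iff {L : Type*} [Field L] {lam mu x₀ : L} (hmu : mu ≠ 0)
    (hx₀ : x₀ ≠ 0) {e : ℕ} (hsol : x₀ ^ e = -(lam / mu)) (x : L) :
    lam * x + mu * x ^ (e + 1) = 0 ↔ ∃ c : L, c ^ (e + 1) = c ∧ x = c * x₀ := by
  have hlam : lam = -(mu * x₀ ^ e) := by
    rw [hsol]
    field_simp
  have hfactor : lam * x + mu * x ^ (e + 1) = mu * (x ^ (e + 1) - x₀ ^ e * x) := by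
    rw [hlam]
    ring
  rw [hfactor, mul_eq_zero, or_iff_right hmu, sub_eq_zero, pow_succ_eq_pow_mul_iff hx₀]

lemma pow_pow_eq_self_iff_gcd {L : Type*} [Field L] [Fintype L] {q m : ℕ}
    (hL : Fintype.card L = q ^ m) (k : ℕ) (x : L) :
    x ^ q ^ k = x ↔ x ^ q ^ Nat.gcd k m = x := by
  have hperiodic : ∀ n, IsPeriodicPt (· ^ q) n x ↔ x ^ q ^ n = x := fun n => by
    rw [IsPeriodicPt, IsFixedPt, pow_iterate]
  have hm : IsPeriodicPt (· ^ q) m x := (hperiodic m).mpr (hL ▸ FiniteField.pow_card x)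
  simp only [← hperiodic]
  exact ⟨fun hk => hk.gcd hm, fun hd => hd.trans_dvd (Nat.gcd_dvd_left k m)⟩

lemma mem_fixedField_zpowers_iff {F E : Type*} [Field F] [Field E] [Algebra F E]
    (g : Gal(E/F)) (x : E) : x ∈ fixedField (Subgroup.zpowers g) ↔ g x = x := by
  rw [mem_fixedField_iff]
  exact Subgroup.zpowers_le (H := MulAction.stabilizer Gal(E/F) x)

section FrobeniusFixedField

variable (K L : Type*) [Field K] [Fintype K] [Field L] [Fintype L] [Algebra K L]

/-- The subfield `F_{q^d}` of `L`, where `q = #K`. -/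
noncomputable def frobeniusFixedField (d : ℕ) : IntermediateField K L :=
  fixedField (Subgroup.zpowers (frobeniusAlgEquivOfAlgebraic K L ^ d))

variable {K L}

lemma mem_frobeniusFixedField_iff (d : ℕ) (x : L) :
    x ∈ frobeniusFixedField K L d ↔ x ^ Fintype.card K ^ d = x := by
  rw [frobeniusFixedField, mem_fixedField_zpowers_iff, AlgEquiv.coe_pow,
    coe_frobeniusAlgEquivOfAlgebraic_iterate]

lemma finrank_frobeniusFixedField {d : ℕ} (hd : d ∣ Module.finrank K L) :
    Module.finrank K (frobeniusFixedField K L d) = d := by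
  have hd_pos : 0 < d := Nat.pos_of_dvd_of_pos hd Module.finrank_pos
  have hcard : Module.finrank (frobeniusFixedField K L d) L = Module.finrank K L / d := by
    rw [frobeniusFixedField, finrank_fixedField_eq_card, Nat.card_zpowers,
      orderOf_pow_of_dvd hd_pos.ne' (orderOf_frobeniusAlgEquivOfAlgebraic K L ▸ hd),
      orderOf_frobeniusAlgEquivOfAlgebraic]
  have htower := Module.finrank_mul_finrank K (frobeniusFixedField K L d) L
  rw [hcard] at htower
  nth_rewrite 2 [← Nat.mul_div_cancel' hd] at htower
  exact Nat.eq_of_mul_eq_mul_right (Nat.div_pos (Nat.le_of_dvd Module.finrank_pos hd) hd_pos) htower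

end FrobeniusFixedField

theorem stmt7_general (K L : Type*) [Field K] [Fintype K] [Field L] [Fintype L] [Algebra K L]
    (k : ℕ)
    (lam mu : L) (hmu : mu ≠ 0)
    (x0 : L) (hx0 : x0 ≠ 0) (hsol : x0 ^ (Fintype.card K ^ k - 1) = -(lam / mu))
    (φ : L →ₗ[K] L) (hφ : ∀ x, φ x = lam * x + mu * x ^ Fintype.card K ^ k) :
    (∀ x : L, φ x = 0 ↔
      ∃ c : L, c ^ Fintype.card K ^ Nat.gcd k (Module.finrank K L) = c ∧ x = c * x0) ∧
    Module.finrank K ↥(LinearMap.ker φ) = Nat.gcd k (Module.finrank K L) := by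
  obtain ⟨e, he⟩ : ∃ e, Fintype.card K ^ k = e + 1 :=
    ⟨Fintype.card K ^ k - 1, (Nat.sub_add_cancel (Nat.one_le_pow _ _ Fintype.card_pos)).symm⟩
  rw [he, Nat.add_sub_cancel] at hsol
  have hker : ∀ x, φ x = 0 ↔
      ∃ c : L, c ^ Fintype.card K ^ Nat.gcd k (Module.finrank K L) = c ∧ x = c * x0 := by
    intro x
    rw [hφ, he, add_mul_pow_succ_eq_zero_iff hmu hx0 hsol, ← he]
    simp only [pow_pow_eq_self_iff_gcd Module.card_eq_pow_finrank k]
  have hker_eq : LinearMap.ker φ =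
      (frobeniusFixedField K L (Nat.gcd k (Module.finrank K L))).toSubalgebra.toSubmodule.map
        (LinearMap.mulRight K x0) := by
    ext x
    rw [LinearMap.mem_ker, hker, Submodule.mem_map]
    simp only [Subalgebra.mem_toSubmodule, mem_toSubalgebra, mem_frobeniusFixedField_iff,
      LinearMap.mulRight_apply, eq_comm (b := x)]
  refine ⟨hker, ?_⟩
  rw [hker_eq,
    ← LinearEquiv.finrank_eq (Submodule.equivMapOfInjective _ (mul_left_injective₀ hx0) _)]
  exact finrank_frobeniusFixedField (Nat.gcd_dvd_right k _)

/-- If `x^{q^k-1} = -λ/μ` has a solution `x₀ ∈ F_{q^m}^*`, then the kernel of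
`x ↦ λx + μx^{q^k}` equals `{c·x₀ : c ∈ F_{q^d}}` (i.e. `{0}` together with a single coset
of `F_{q^d}^*`, where `F_{q^d}` is the subfield fixed by `x ↦ x^{q^d}`), and it is an
`F_q`-subspace of dimension `d = gcd(k,m)`. -/
theorem stmt7 (K L : Type*) [Field K] [Fintype K] [Field L] [Fintype L] [Algebra K L]
    (hm : 2 ≤ Module.finrank K L)
    (k : ℕ) (hk1 : 1 ≤ k) (hk2 : k ≤ Module.finrank K L - 1)
    (lam mu : L) (hlam : lam ≠ 0) (hmu : mu ≠ 0)
    (x0 : L) (hx0 : x0 ≠ 0) (hsol : x0 ^ (Fintype.card K ^ k - 1) = -(lam / mu))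
    (φ : L →ₗ[K] L) (hφ : ∀ x, φ x = lam * x + mu * x ^ Fintype.card K ^ k) :
    (∀ x : L, φ x = 0 ↔
      ∃ c : L, c ^ Fintype.card K ^ Nat.gcd k (Module.finrank K L) = c ∧ x = c * x0) ∧
    Module.finrank K ↥(LinearMap.ker φ) = Nat.gcd k (Module.finrank K L) :=
  stmt7_general K L k lam mu hmu x0 hx0 hsol φ hφ
end

section
/- Let d | m and let W = x_0 · F_{q^d} ⊆ F_{q^m} for some x_0 ≠ 0 (a one-dimensional F_{q^d}-subspace). Then Tr_{F_{q^m}/F_q}(y_1 y_2) = 0 for all y_1, y_2 ∈ W if and only if Tr_{F_{q^m}/F_{q^d}}(x_0^2) = 0. -/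
/-- For the tower `F_q ⊆ F_{q^d} ⊆ F_{q^m}` and the line `W = x₀ · F_{q^d}` (`x₀ ≠ 0`):
`Tr_{F_{q^m}/F_q}(y₁y₂) = 0` for all `y₁,y₂ ∈ W` iff `Tr_{F_{q^m}/F_{q^d}}(x₀²) = 0`. -/
theorem stmt13 (K M L : Type*) [Field K] [Fintype K] [Field M] [Fintype M]
    [Field L] [Fintype L] [Algebra K M] [Algebra M L] [Algebra K L]
    [IsScalarTower K M L]
    (x0 : L) (hx0 : x0 ≠ 0) :
    (∀ c1 c2 : M,
        Algebra.trace K L ((x0 * algebraMap M L c1) * (x0 * algebraMap M L c2)) = 0) ↔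
      Algebra.trace M L (x0 ^ 2) = 0 := by
  haveI : FiniteDimensional K M := Module.Finite.of_finite
  haveI : Algebra.IsSeparable K M := inferInstance
  have key : ∀ c1 c2 : M,
      Algebra.trace K L ((x0 * algebraMap M L c1) * (x0 * algebraMap M L c2)) =
        Algebra.trace K M (c1 * c2 * Algebra.trace M L (x0 ^ 2)) := by
    intro c1 c2
    rw [← Algebra.trace_trace (S := M)]
    congr 1
    have : (x0 * algebraMap M L c1) * (x0 * algebraMap M L c2) =
        algebraMap M L (c1 * c2) * x0 ^ 2 := by ring_nf; rw [map_mul]; ring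
    rw [this, ← Algebra.smul_def, map_smul, smul_eq_mul]
  constructor
  · intro h
    by_contra ht
    obtain ⟨a, ha⟩ := Algebra.trace_surjective K M 1
    have := h (a * (Algebra.trace M L (x0 ^ 2))⁻¹) 1
    rw [key] at this
    rw [mul_one, mul_assoc, inv_mul_cancel₀ ht, mul_one, ha] at this
    exact one_ne_zero this
  · intro h c1 c2
    rw [key, h, mul_zero, map_zero]
end

section
/- Let F_1,…,F_k be k elements of the space of reduced q-polynomials over F_{q^m} (equivalently, of F_{q^m}^m via coefficient vectors), each with zero constant term, such that X, F_1, …, F_k are F_{q^m}-linearly independent. Let C = span_{F_{q^m}}{X, F_1,…,F_k} with dual C^⊥ taken for the F_{q^m}-bilinear pairing ⟨f,g⟩ = Σ_ℓ f_ℓ g_ℓ on coefficient vectors. Let M be the k×k matrix over F_{q^m} with M_{jj'} = Σ_{ℓ=1}^{m−1} (F_j)_ℓ (F_{j'})_ℓ. Then dim_{F_{q^m}}(C ∩ C^⊥) = k − rank(M). -/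
/-!
Write `C = ⟨e, F₁, …, F_k⟩` with `e = X`. Since every `F_j` has zero constant term, `e` is
orthogonal to all `F_j` while `⟨e, e⟩ = 1`; pairing a hull element `c e + ∑ a_j F_j` with `e`
therefore kills `c`, so the hull of `C` is the hull of `⟨F₁, …, F_k⟩`. Pairing `∑ a_j F_j` with
the `F_j` computes `M a`, so that hull is the image of `ker M` under the injective map
`a ↦ ∑ a_j F_j`, and rank–nullity gives its dimension `k - rank M`.
-/

/-- The symmetric bilinear pairing `⟨f,g⟩ = ∑ ℓ f_ℓ g_ℓ` on coefficient vectors. -/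
noncomputable def dotForm (E : Type*) [Field E] (m : ℕ) :
    LinearMap.BilinForm E (Fin m → E) :=
  LinearMap.mk₂ E (fun f g => ∑ ℓ, f ℓ * g ℓ)
    (fun f f' g => by simp [add_mul, Finset.sum_add_distrib])
    (fun c f g => by simp [Finset.mul_sum, mul_assoc])
    (fun f g g' => by simp [mul_add, Finset.sum_add_distrib])
    (fun c f g => by simp [Finset.mul_sum, mul_left_comm])

open Submodule Set Module Matrix

theorem Matrix.finrank_ker_mulVecLin {K m n : Type*} [Field K] [Fintype n]
    (A : Matrix m n K) :
    finrank K (LinearMap.ker A.mulVecLin) = Fintype.card n - A.rank := by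
  have h := LinearMap.finrank_range_add_finrank_ker A.mulVecLin
  rw [finrank_fintype_fun_eq_card] at h
  rw [Matrix.rank]
  omega

namespace LinearMap.BilinForm

variable {R V : Type*} [CommRing R] [AddCommGroup V] [Module R V] (B : LinearMap.BilinForm R V)

def gramMatrix {ι : Type*} (v : ι → V) : Matrix ι ι R :=
  of fun i j => B (v i) (v j)

theorem apply_fintypeLinearCombination {ι : Type*} [Fintype ι] (v : ι → V) (i : ι)
    (a : ι → R) :
    B (v i) (Fintype.linearCombination R v a) = (B.gramMatrix v *ᵥ a) i := by
  simp [Fintype.linearCombination_apply, gramMatrix, mulVec, dotProduct, mul_comm]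

theorem mem_orthogonal_span_iff {S : Set V} {x : V} :
    x ∈ B.orthogonal (span R S) ↔ ∀ s ∈ S, B s x = 0 :=
  ⟨fun h s hs => h s (subset_span hs),
    fun h _ hn => span_le.2 (show S ⊆ LinearMap.ker (B.flip x) from h) hn⟩

theorem span_range_inf_orthogonal_eq_map_ker {ι : Type*} [Fintype ι] (v : ι → V) :
    span R (Set.range v) ⊓ B.orthogonal (span R (Set.range v)) =
      (LinearMap.ker (B.gramMatrix v).mulVecLin).map (Fintype.linearCombination R v) := by
  ext x
  rw [mem_inf, mem_orthogonal_span_iff, ← Fintype.range_linearCombination]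
  constructor
  · rintro ⟨⟨a, rfl⟩, hx⟩
    refine ⟨a, funext fun i => ?_, rfl⟩
    simpa [apply_fintypeLinearCombination] using hx (v i) ⟨i, rfl⟩
  · rintro ⟨a, ha, rfl⟩
    refine ⟨⟨a, rfl⟩, ?_⟩
    rintro _ ⟨i, rfl⟩
    rw [apply_fintypeLinearCombination]
    exact congrFun ha i

theorem span_insert_inf_orthogonal [NoZeroDivisors R] {e : V} {S : Set V} (he : B e e ≠ 0)
    (hS : ∀ s ∈ S, B e s = 0) :
    span R (insert e S) ⊓ B.orthogonal (span R (insert e S)) =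
      span R S ⊓ B.orthogonal (span R S) := by
  have hspan : ∀ y ∈ span R S, B e y = 0 := fun y hy =>
    span_le.2 (show S ⊆ LinearMap.ker (B e) from hS) hy
  ext x
  simp only [mem_inf, mem_orthogonal_span_iff, forall_mem_insert]
  constructor
  · rintro ⟨hx, hex, hSx⟩
    obtain ⟨c, y, hy, rfl⟩ := mem_span_insert.1 hx
    have hc : c = 0 := by
      simpa [hspan y hy, he] using hex
    subst hc
    simp only [zero_smul, zero_add] at hSx ⊢
    exact ⟨hy, hSx⟩
  · rintro ⟨hx, hSx⟩
    exact ⟨span_mono (subset_insert e S) hx, hspan x hx, hSx⟩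

end LinearMap.BilinForm

theorem dotForm_apply_eq_dotProduct (E : Type*) [Field E] (m : ℕ) (f g : Fin m → E) :
    dotForm E m f g = f ⬝ᵥ g :=
  rfl

theorem stmt14_general (m k : ℕ) [NeZero m]
    (E : Type*) [Field E]
    (F : Fin k → (Fin m → E)) (hF0 : ∀ j, F j 0 = 0)
    (hind : LinearIndependent E
      (Fin.cons (Pi.single (0 : Fin m) (1 : E)) F : Fin (k + 1) → Fin m → E))
    (M : Matrix (Fin k) (Fin k) E)
    (hM : ∀ j j', M j j' = ∑ ℓ, F j ℓ * F j' ℓ) :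
    Module.finrank E
        ↥(Submodule.span E (Set.range
            (Fin.cons (Pi.single (0 : Fin m) (1 : E)) F : Fin (k + 1) → Fin m → E)) ⊓
          (dotForm E m).orthogonal (Submodule.span E (Set.range
            (Fin.cons (Pi.single (0 : Fin m) (1 : E)) F : Fin (k + 1) → Fin m → E)))) =
      k - M.rank := by
  have hFind : LinearIndependent E F := (linearIndependent_finCons.1 hind).1
  have hGram : (dotForm E m).gramMatrix F = M := Matrix.ext fun j j' => (hM j j').symm
  have hXF : ∀ f ∈ range F, dotForm E m (Pi.single 0 1) f = 0 := by
    rintro _ ⟨j, rfl⟩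
    rw [dotForm_apply_eq_dotProduct, single_dotProduct, one_mul, hF0]
  have hXX : dotForm E m (Pi.single 0 1) (Pi.single 0 1) ≠ 0 := by
    simp [dotForm_apply_eq_dotProduct]
  rw [Fin.range_cons, (dotForm E m).span_insert_inf_orthogonal hXX hXF,
    (dotForm E m).span_range_inf_orthogonal_eq_map_ker, hGram,
    ← LinearEquiv.finrank_eq (equivMapOfInjective _ hFind.fintypeLinearCombination_injective _),
    finrank_ker_mulVecLin, Fintype.card_fin]

/-- Hull dimension of the rank-distance code `C = ⟨X, F₁, …, F_k⟩_{F_{q^m}}` with each `F_j`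
having zero constant term and `X, F₁, …, F_k` linearly independent: for the Gram matrix
`M_{jj'} = ∑_{ℓ≥1} (F_j)_ℓ (F_{j'})_ℓ`, `dim (C ∩ C^⊥) = k - rank M`. -/
theorem stmt14 (q m k : ℕ) (hq : IsPrimePow q) [NeZero m]
    (E : Type*) [Field E] [Fintype E] (hcard : Fintype.card E = q ^ m)
    (F : Fin k → (Fin m → E)) (hF0 : ∀ j, F j 0 = 0)
    (hind : LinearIndependent E
      (Fin.cons (Pi.single (0 : Fin m) (1 : E)) F : Fin (k + 1) → Fin m → E))
    (M : Matrix (Fin k) (Fin k) E)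
    (hM : ∀ j j', M j j' = ∑ ℓ, F j ℓ * F j' ℓ) :
    Module.finrank E
        ↥(Submodule.span E (Set.range
            (Fin.cons (Pi.single (0 : Fin m) (1 : E)) F : Fin (k + 1) → Fin m → E)) ⊓
          (dotForm E m).orthogonal (Submodule.span E (Set.range
            (Fin.cons (Pi.single (0 : Fin m) (1 : E)) F : Fin (k + 1) → Fin m → E)))) =
      k - M.rank :=
  stmt14_general m k E F hF0 hind M hM
end

section
/- Let f = Σ_{i=1}^{m−1} f_i X^{q^i} with coefficient vector (0,f_1,…,f_{m−1}) ∈ F_{q^m}^m, and let C = span_{F_{q^m}}{X, f} with X and f linearly independent, dual taken for the pairing ⟨u,v⟩ = Σ_ℓ u_ℓ v_ℓ. Set σ_f = Σ_{i=1}^{m−1} f_i^2. Then C ∩ C^⊥ = span_{F_{q^m}}{f} if σ_f = 0, and C ∩ C^⊥ = {0} if σ_f ≠ 0. -/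
/-- The hull of `C = ⟨X, f⟩_{F_{q^m}}` (with `f_0 = 0`, `X, f` linearly independent and
`σ_f = ∑ f_i²`): `C ∩ C^⊥ = ⟨f⟩` if `σ_f = 0`, and `C ∩ C^⊥ = 0` if `σ_f ≠ 0`. -/
theorem stmt16 (q m : ℕ) (hq : IsPrimePow q) (hm : 2 ≤ m) [NeZero m]
    (E : Type*) [Field E] [Fintype E] (hcard : Fintype.card E = q ^ m)
    (f : Fin m → E) (hf0 : f 0 = 0)
    (hind : LinearIndependent E ![(Pi.single (0 : Fin m) (1 : E)), f]) :
    (∑ i, f i ^ 2 = 0 →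
      Submodule.span E {Pi.single (0 : Fin m) (1 : E), f} ⊓
          (dotForm E m).orthogonal
            (Submodule.span E {Pi.single (0 : Fin m) (1 : E), f}) =
        Submodule.span E {f}) ∧
    (∑ i, f i ^ 2 ≠ 0 →
      Submodule.span E {Pi.single (0 : Fin m) (1 : E), f} ⊓
          (dotForm E m).orthogonal
            (Submodule.span E {Pi.single (0 : Fin m) (1 : E), f}) = ⊥) := by
  set X : Fin m → E := Pi.single (0 : Fin m) (1 : E) with hX
  set σ : E := ∑ i, f i ^ 2 with hσ
  have hXv : ∀ v : Fin m → E, dotForm E m X v = v 0 := by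
    intro v; simp [dotForm, X, Pi.single_apply]
  have hff : dotForm E m f f = σ := by
    simp [dotForm, σ, sq]
  have hfX : dotForm E m f X = 0 := by
    simp [dotForm, X, Pi.single_apply, hf0]
  have key : ∀ v : Fin m → E,
      v ∈ Submodule.span E {X, f} ⊓ (dotForm E m).orthogonal (Submodule.span E {X, f})
        ↔ ∃ b : E, v = b • f ∧ b * σ = 0 := by
    intro v
    constructor
    · rintro ⟨hv, hvo⟩
      obtain ⟨a, b, rfl⟩ := Submodule.mem_span_pair.mp hv
      have hXmem : X ∈ Submodule.span E ({X, f} : Set (Fin m → E)) :=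
        Submodule.subset_span (by simp)
      have hfmem : f ∈ Submodule.span E ({X, f} : Set (Fin m → E)) :=
        Submodule.subset_span (by simp)
      have h1 : dotForm E m X (a • X + b • f) = 0 := hvo X hXmem
      rw [hXv] at h1
      have ha : a = 0 := by
        simpa [X, Pi.single_apply, hf0] using h1
      subst ha
      have h2 : dotForm E m f ((0:E) • X + b • f) = 0 := hvo f hfmem
      simp only [zero_smul, zero_add, map_smul, smul_eq_mul, hff] at h2
      exact ⟨b, by simp, h2⟩
    · rintro ⟨b, rfl, hb⟩
      refine ⟨?_, ?_⟩
      · exact Submodule.mem_span_pair.mpr ⟨0, b, by simp⟩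
      · intro n hn
        obtain ⟨a, c, rfl⟩ := Submodule.mem_span_pair.mp hn
        have : dotForm E m (a • X + c • f) (b • f)
            = a * (b * f 0) + c * (b * σ) := by
          simp only [map_add, map_smul, LinearMap.add_apply, LinearMap.smul_apply,
            smul_eq_mul, hff]
          rw [hXv]; ring
        simp only [LinearMap.BilinForm.IsOrtho, this, hf0, hb, mul_zero, add_zero]
    
  constructor
  · intro hs
    apply le_antisymm
    · intro v hv
      obtain ⟨b, rfl, -⟩ := (key v).mp hv
      exact Submodule.smul_mem _ _ (Submodule.subset_span rfl)
    · intro v hv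
      obtain ⟨b, rfl⟩ := Submodule.mem_span_singleton.mp hv
      exact (key _).mpr ⟨b, rfl, by rw [hs, mul_zero]⟩
  · intro hs
    rw [eq_bot_iff]
    intro v hv
    obtain ⟨b, rfl, hb⟩ := (key v).mp hv
    have : b = 0 := by
      rcases mul_eq_zero.mp hb with h | h
      · exact h
      · exact absurd h hs
    simp [this]
end
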